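/- For every n ≥ 2, the complete geometric graph on the regular wheel configuration W_{2n} contains n−1 pairwise edge-disjoint plane spanning paths. -/

import Mathlib

/-- Points in the plane. -/
abbrev Pt : Type := ℝ × ℝ

/-- A finite point set is in general position if no three of its points are collinear. -/
def GenPos (S : Finset Pt) : Prop :=
  ∀ p ∈ S, ∀ q ∈ S, ∀ r ∈ S, p ≠ q → p ≠ r → q ≠ r →
    ¬ Collinear ℝ ({p, q, r} : Set Pt)

/-- A geometric graph on `S` (a simple graph on the points of `S`, edges drawn as
straight segments) is plane if the open segments of any two distinct edges are disjoint. -/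
def IsPlaneGraph {S : Finset Pt} (G : SimpleGraph {x // x ∈ S}) : Prop :=
  ∀ a b c d : {x // x ∈ S}, G.Adj a b → G.Adj c d → s(a, b) ≠ s(c, d) →
    openSegment ℝ (a : Pt) (b : Pt) ∩ openSegment ℝ (c : Pt) (d : Pt) = ∅

/-- A plane spanning tree of `S`: a tree on all points of `S` drawn without crossings. -/
def IsPlaneSpanningTree {S : Finset Pt} (G : SimpleGraph {x // x ∈ S}) : Prop :=
  G.IsTree ∧ IsPlaneGraph G

/-- A plane spanning path of `S`: a plane spanning tree in which every vertex
has degree at most two (i.e. a plane Hamiltonian path). -/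
def IsPlaneSpanningPath {S : Finset Pt} (G : SimpleGraph {x // x ∈ S}) : Prop :=
  IsPlaneSpanningTree G ∧
    ∀ v a b c : {x // x ∈ S}, G.Adj v a → G.Adj v b → G.Adj v c →
      (a = b ∨ a = c ∨ b = c)

/-- The open segment spanned by an unordered pair of points. -/
def segOpen (e : Sym2 Pt) : Set Pt :=
  Sym2.lift ⟨fun a b => openSegment ℝ a b, fun a b => openSegment_symm ℝ a b⟩ e

/-- `F` is a crossing family in `S`: a set of nondegenerate segments with endpoints
in `S`, any two of which cross (their open segments intersect). -/
def IsCrossingFamily (S : Finset Pt) (F : Finset (Sym2 Pt)) : Prop :=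
  (∀ e ∈ F, ¬ e.IsDiag ∧ ∀ x ∈ e, x ∈ S) ∧
  (∀ e ∈ F, ∀ f ∈ F, e ≠ f → (segOpen e ∩ segOpen f).Nonempty)

/-- `x` lies strictly to the left of the directed line from `p` to `q`. -/
def leftOf (p q x : Pt) : Prop :=
  0 < (q.1 - p.1) * (x.2 - p.2) - (q.2 - p.2) * (x.1 - p.1)

/-- `x` lies strictly to the right of the directed line from `p` to `q`. -/
def rightOf (p q x : Pt) : Prop :=
  (q.1 - p.1) * (x.2 - p.2) - (q.2 - p.2) * (x.1 - p.1) < 0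

/-- The double star on `S` associated with the directed edge `pq`: the edge `pq`,
the edges from `p` to all points strictly left of the directed line `pq`, and the
edges from `q` to all points strictly right of it. -/
def doubleStar (S : Finset Pt) (p q : Pt) : SimpleGraph {x // x ∈ S} :=
  SimpleGraph.fromRel fun a b =>
    ((a : Pt) = p ∧ (b : Pt) = q) ∨
    ((a : Pt) = p ∧ leftOf p q (b : Pt)) ∨
    ((a : Pt) = q ∧ rightOf p q (b : Pt))

/-- The regular wheel configuration `W_{2n}`: `2n-1` points regularly spaced on the
unit circle together with its center. -/
noncomputable def wheel (n : ℕ) : Finset Pt :=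
  insert ((0 : ℝ), (0 : ℝ)) <| (Finset.range (2 * n - 1)).image fun j : ℕ =>
    (Real.cos (2 * Real.pi * (j : ℝ) / ((2 * n - 1 : ℕ) : ℝ)),
     Real.sin (2 * Real.pi * (j : ℝ) / ((2 * n - 1 : ℕ) : ℝ)))

/-!
Put `m = 2n - 1`, index the rim points by `ℤ` modulo `m` (`polygonPt m j`), and let `K = ⌊n/2⌋`,
so `2K ∈ {n - 1, n}`. For `0 ≤ i ≤ n - 2` the `i`-th path follows the zigzag
`i, i+1, i-1, i+2, i-2, …, i-(n-1)`, which visits every rim point once, with the center inserted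
between `i + K` and `i - K`.

Its rim edges are chords `{a, b}` with `a + b ∈ {2i, 2i+1}`; any two such chords are nested, hence
do not cross. Its two spokes end at `i ± K`: a chord of length `< 2K` spans less than half the
circle and has the center and both spoke ends on the same side, while a chord of length `> 2K`
spans more than half and has both spoke ends inside its arc. Since `m` is odd, the numbers `2i` and
`2i + 1` for `0 ≤ i ≤ n - 2` are distinct residues, so different paths share no chord, and likewise
no spoke.

Every crossing test is a sign computation for `orient`, which on three rim points is a product of
three sines.
-/
open Real

def orient (p q x : Pt) : ℝ := (q.1 - p.1) * (x.2 - p.2) - (q.2 - p.2) * (x.1 - p.1)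

lemma orient_rotate (p q x : Pt) : orient p q x = orient x p q := by
  simp only [orient]; ring

lemma disjoint_openSegment_of_orient {a b c d : Pt} (hc : 0 ≤ orient a b c)
    (hd : 0 ≤ orient a b d) (hcd : 0 < orient a b c + orient a b d) :
    Disjoint (openSegment ℝ a b) (openSegment ℝ c d) := by
  rw [Set.disjoint_left]
  rintro _ ⟨s, t, -, -, hst, rfl⟩ ⟨s', t', hs', ht', hst', hx⟩
  obtain rfl : s = 1 - t := by linarith
  obtain rfl : s' = 1 - t' := by linarith
  have h₀ : orient a b ((1 - t) • a + t • b) = 0 := by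
    simp only [orient, Prod.smul_fst, Prod.smul_snd, Prod.fst_add, Prod.snd_add, smul_eq_mul]
    ring
  have h₁ : orient a b ((1 - t') • c + t' • d) = (1 - t') * orient a b c + t' * orient a b d := by
    simp only [orient, Prod.smul_fst, Prod.smul_snd, Prod.fst_add, Prod.snd_add, smul_eq_mul]
    ring
  rw [hx, h₀] at h₁
  rcases hc.lt_or_eq with hc | hc <;> nlinarith

lemma orient_zero_cos_sin (α β : ℝ) :
    orient 0 (cos α, sin α) (cos β, sin β) = sin (β - α) := by
  simp only [orient, Prod.fst_zero, Prod.snd_zero, sin_sub]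
  ring

lemma orient_cos_sin (α u v : ℝ) :
    orient (cos α, sin α) (cos (α + 2 * u), sin (α + 2 * u)) (cos (α + 2 * v), sin (α + 2 * v))
      = 4 * sin u * sin (v - u) * sin v := by
  have h₁ := sin_sq_add_cos_sq α
  have h₂ := sin_sq_add_cos_sq u
  have h₃ := sin_sq_add_cos_sq v
  simp only [orient, cos_add, sin_add, sin_sub, sin_two_mul, cos_two_mul]
  linear_combination (4 * cos u * sin u * (1 - cos v ^ 2) + 4 * cos v * sin v * (cos u ^ 2 - 1)) * h₁
    - 4 * cos u * sin u * h₃ + 4 * cos v * sin v * h₂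

section SinSign

variable {m : ℕ} {d : ℤ}

lemma sin_pi_mul_div_pos (h₀ : 0 < d) (h₁ : d < m) : 0 < sin (π * d / m) := by
  have hd : (0 : ℝ) < d := by exact_mod_cast h₀
  have hdm : (d : ℝ) < m := by exact_mod_cast h₁
  have hm : (0 : ℝ) < m := hd.trans hdm
  apply sin_pos_of_pos_of_lt_pi (by positivity)
  rw [div_lt_iff₀ hm]
  nlinarith [pi_pos]

lemma sin_pi_mul_div_nonneg (h₀ : 0 ≤ d) (h₁ : d ≤ m) : 0 ≤ sin (π * d / m) := by
  have hd : (0 : ℝ) ≤ d := by exact_mod_cast h₀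
  have hdm : (d : ℝ) ≤ m := by exact_mod_cast h₁
  apply sin_nonneg_of_nonneg_of_le_pi (by positivity)
  rcases (hd.trans hdm).lt_or_eq with hm | hm
  · rw [div_le_iff₀ hm]; nlinarith [pi_pos]
  · simp [← hm, pi_nonneg]

end SinSign

lemma Int.ModEq.eq_of_lt_add {m a b : ℤ} (h : a ≡ b [ZMOD m]) (h₁ : a < b + m) (h₂ : b < a + m) :
    a = b := by
  have := Int.eq_zero_of_abs_lt_dvd (Int.ModEq.dvd h) (abs_lt.mpr ⟨by linarith, by linarith⟩)
  linarith

noncomputable def polygonPt (m : ℕ) (j : ℤ) : Pt := (cos (2 * π * j / m), sin (2 * π * j / m))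

section Polygon

variable {m : ℕ}

lemma polygonPt_eq_iff (hm : 0 < m) {a b : ℤ} :
    polygonPt m a = polygonPt m b ↔ a ≡ b [ZMOD m] := by
  have hm' : (m : ℝ) ≠ 0 := by positivity
  rw [Int.modEq_iff_dvd, polygonPt, polygonPt, Prod.mk.injEq]
  constructor
  · rintro ⟨hcos, hsin⟩
    obtain ⟨k, hk⟩ := Real.Angle.angle_eq_iff_two_pi_dvd_sub.mp (Real.Angle.cos_sin_inj hcos hsin)
    refine ⟨-k, ?_⟩
    field_simp at hk
    have : ((b - a : ℤ) : ℝ) = ((m * -k : ℤ) : ℝ) := by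
      push_cast
      nlinarith [pi_pos]
    exact_mod_cast this
  · rintro ⟨k, hk⟩
    have : 2 * π * a / m = 2 * π * b / m + (-k : ℤ) * (2 * π) := by
      rw [show (a : ℝ) = b - m * k by exact_mod_cast (by linarith : a = b - m * k)]
      push_cast
      field_simp
      ring
    rw [this, cos_add_int_mul_two_pi, sin_add_int_mul_two_pi]
    exact ⟨rfl, rfl⟩

lemma polygonPt_add_self (hm : 0 < m) (j : ℤ) : polygonPt m (j + m) = polygonPt m j :=
  (polygonPt_eq_iff hm).mpr Int.add_modEq_right

lemma polygonPt_ne_zero (j : ℤ) : polygonPt m j ≠ 0 := by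
  intro h
  have h₁ := sin_sq_add_cos_sq (2 * π * j / m)
  rw [show cos _ = 0 from congrArg Prod.fst h, show sin _ = 0 from congrArg Prod.snd h] at h₁
  norm_num at h₁

lemma orient_polygonPt (hm : 0 < m) (a b x : ℤ) :
    orient (polygonPt m a) (polygonPt m b) (polygonPt m x) =
      4 * sin (π * (b - a : ℤ) / m) * sin (π * (x - b : ℤ) / m) * sin (π * (x - a : ℤ) / m) := by
  have hm' : (m : ℝ) ≠ 0 := by positivity
  have hb : 2 * π * b / m = 2 * π * a / m + 2 * (π * (b - a : ℤ) / m) := by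
    push_cast; field_simp; ring
  have hx : 2 * π * x / m = 2 * π * a / m + 2 * (π * (x - a : ℤ) / m) := by
    push_cast; field_simp; ring
  have hd : π * (x - a : ℤ) / m - π * (b - a : ℤ) / m = π * (x - b : ℤ) / m := by
    push_cast; field_simp; ring
  rw [polygonPt, polygonPt, polygonPt, hb, hx, orient_cos_sin, hd]

lemma orient_zero_polygonPt (hm : 0 < m) (u x : ℤ) :
    orient 0 (polygonPt m u) (polygonPt m x) = sin (π * (2 * (x - u) : ℤ) / m) := by
  have hm' : (m : ℝ) ≠ 0 := by positivity
  rw [polygonPt, polygonPt, orient_zero_cos_sin]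
  congr 1
  push_cast; field_simp

lemma orient_polygonPt_nonneg (hm : 0 < m) {a b x : ℤ} (hab : a ≤ b) (hbx : b ≤ x)
    (hxa : x ≤ a + m) : 0 ≤ orient (polygonPt m a) (polygonPt m b) (polygonPt m x) := by
  rw [orient_polygonPt hm]
  have := sin_pi_mul_div_nonneg (m := m) (d := b - a) (by omega) (by omega)
  have := sin_pi_mul_div_nonneg (m := m) (d := x - b) (by omega) (by omega)
  have := sin_pi_mul_div_nonneg (m := m) (d := x - a) (by omega) (by omega)
  positivity

lemma orient_polygonPt_pos (hm : 0 < m) {a b x : ℤ} (hab : a < b) (hbx : b < x)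
    (hxa : x < a + m) : 0 < orient (polygonPt m a) (polygonPt m b) (polygonPt m x) := by
  rw [orient_polygonPt hm]
  have := sin_pi_mul_div_pos (m := m) (d := b - a) (by omega) (by omega)
  have := sin_pi_mul_div_pos (m := m) (d := x - b) (by omega) (by omega)
  have := sin_pi_mul_div_pos (m := m) (d := x - a) (by omega) (by omega)
  positivity

lemma disjoint_chord_chord_of_nested (hm : 0 < m) {a b c d : ℤ} (hca : c ≤ a) (hab : a < b)
    (hbd : b ≤ d) (hdc : d - c < m) (hne : (a, b) ≠ (c, d)) :
    Disjoint (openSegment ℝ (polygonPt m a) (polygonPt m b))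
      (openSegment ℝ (polygonPt m c) (polygonPt m d)) := by
  rw [← polygonPt_add_self hm c]
  have hc := orient_polygonPt_nonneg hm hab.le (x := c + m) (by omega) (by omega)
  have hd := orient_polygonPt_nonneg hm hab.le hbd (by omega)
  refine disjoint_openSegment_of_orient hc hd ?_
  rcases hca.lt_or_eq with hca | rfl
  · linarith [orient_polygonPt_pos hm hab (x := c + m) (by omega) (by omega)]
  · have hbd : b < d := hbd.lt_of_ne fun h => hne (by rw [h])
    linarith [orient_polygonPt_pos hm hab hbd (by omega)]

lemma disjoint_chord_chord_of_sum (hm : 0 < m) {a b c d : ℤ} (hab : a < b) (hba : b - a < m)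
    (hcd : c < d) (hdc : d - c < m) (hsum₁ : a + b ≤ c + d + 1) (hsum₂ : c + d ≤ a + b + 1)
    (hne : (a, b) ≠ (c, d)) :
    Disjoint (openSegment ℝ (polygonPt m a) (polygonPt m b))
      (openSegment ℝ (polygonPt m c) (polygonPt m d)) := by
  rcases le_or_gt (b - a) (d - c) with h | h
  · exact disjoint_chord_chord_of_nested hm (by omega) hab (by omega) hdc hne
  · exact (disjoint_chord_chord_of_nested hm (by omega) hcd (by omega) hba hne.symm).symm

lemma disjoint_chord_spoke (hm : 0 < m) {a b x : ℤ} (hab : a < b) (hba : 2 * (b - a) < m)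
    (hbx : b ≤ x) (hxa : x ≤ a + m) :
    Disjoint (openSegment ℝ (polygonPt m a) (polygonPt m b)) (openSegment ℝ 0 (polygonPt m x)) := by
  have h₀ : 0 < orient (polygonPt m a) (polygonPt m b) 0 := by
    rw [orient_rotate, orient_zero_polygonPt hm]
    exact sin_pi_mul_div_pos (by omega) hba
  have hx := orient_polygonPt_nonneg hm hab.le hbx hxa
  exact disjoint_openSegment_of_orient h₀.le hx (by linarith)

lemma disjoint_chord_spoke_of_long (hm : 0 < m) {a b x : ℤ} (hba : b - a < m)
    (hab : m < 2 * (b - a)) (hax : a ≤ x) (hxb : x ≤ b) :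
    Disjoint (openSegment ℝ (polygonPt m a) (polygonPt m b)) (openSegment ℝ 0 (polygonPt m x)) := by
  rw [← polygonPt_add_self hm a, ← polygonPt_add_self hm x, openSegment_symm]
  exact disjoint_chord_spoke hm (by omega) (by omega) (by omega) (by omega)

lemma disjoint_spoke_spoke (hm : 0 < m) {u v : ℤ} (huv : u < v) (hvu : v - u < m)
    (hhalf : 2 * (v - u) ≠ m) :
    Disjoint (openSegment ℝ 0 (polygonPt m u)) (openSegment ℝ 0 (polygonPt m v)) := by
  have of_short : ∀ {u v : ℤ}, u < v → 2 * (v - u) < m →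
      Disjoint (openSegment ℝ 0 (polygonPt m u)) (openSegment ℝ 0 (polygonPt m v)) := by
    intro u v huv hvu
    have h₀ : orient 0 (polygonPt m u) 0 = 0 := by simp [orient]
    have hv : 0 < orient 0 (polygonPt m u) (polygonPt m v) := by
      rw [orient_zero_polygonPt hm]
      exact sin_pi_mul_div_pos (by omega) hvu
    exact disjoint_openSegment_of_orient h₀.ge hv.le (by linarith)
  rcases lt_or_gt_of_ne hhalf with h | h
  · exact of_short huv h
  · rw [← polygonPt_add_self hm u]
    exact (of_short (by omega) (by omega)).symm

end Polygon

namespace SimpleGraph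

lemma pathGraph_isAcyclic (N : ℕ) : (pathGraph N).IsAcyclic := by
  have isBridge_succ : ∀ u v : Fin N, u.val + 1 = v.val →
      ¬ ((pathGraph N).deleteEdges {s(u, v)}).Reachable u v := by
    rintro u v huv ⟨p⟩
    obtain ⟨d, -, hd₁, hd₂⟩ := p.exists_boundary_dart {w | w ≤ u} (le_refl u)
      (by simp only [Set.mem_ofPred_eq, not_le, Fin.lt_def]; omega)
    obtain ⟨hadj, hne⟩ := (deleteEdges_adj ..).mp d.adj
    simp only [Set.mem_ofPred_eq, not_le, Fin.le_def] at hd₁ hd₂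
    rw [pathGraph_adj] at hadj
    apply hne
    rw [Set.mem_singleton_iff, Fin.ext (by omega : d.fst.val = u.val),
      Fin.ext (by omega : d.snd.val = v.val)]
  rw [isAcyclic_iff_forall_adj_isBridge]
  intro u v huv
  rw [isBridge_iff]
  rcases pathGraph_adj.mp huv with h | h
  · exact isBridge_succ u v h
  · rw [Sym2.eq_swap]
    exact fun hr => isBridge_succ v u h hr.symm

lemma pathGraph_isTree (N : ℕ) : (pathGraph (N + 1)).IsTree :=
  ⟨pathGraph_connected N, pathGraph_isAcyclic _⟩

variable {V : Type*} {N : ℕ}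

def pathGraphOf (e : Fin N ≃ V) : SimpleGraph V := (pathGraph N).comap e.symm

lemma pathGraphOf_isTree (hN : 0 < N) (e : Fin N ≃ V) : (pathGraphOf e).IsTree := by
  obtain ⟨N, rfl⟩ := Nat.exists_eq_add_one_of_ne_zero hN.ne'
  exact (Iso.isTree_iff ⟨e.symm, Iff.rfl⟩).mpr (pathGraph_isTree N)

lemma pathGraphOf_adj (e : Fin N ≃ V) {u v : V} (h : (pathGraphOf e).Adj u v) :
    ∃ k k' : Fin N, k.val + 1 = k'.val ∧ s(u, v) = s(e k, e k') := by
  rcases pathGraph_adj.mp h with h | h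
  · exact ⟨e.symm u, e.symm v, h, by simp⟩
  · exact ⟨e.symm v, e.symm u, h, by simp [Sym2.eq_swap]⟩

lemma pathGraphOf_adj_pigeonhole (e : Fin N ≃ V) {v a b c : V} (ha : (pathGraphOf e).Adj v a)
    (hb : (pathGraphOf e).Adj v b) (hc : (pathGraphOf e).Adj v c) : a = b ∨ a = c ∨ b = c := by
  simp only [pathGraphOf, comap_adj, pathGraph_adj] at ha hb hc
  simp only [← e.symm.injective.eq_iff, Fin.ext_iff]
  omega

end SimpleGraph

section GeometricGraph

variable {S : Finset Pt}

lemma segOpen_mk (x y : Pt) : segOpen s(x, y) = openSegment ℝ x y := rfl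

lemma isPlaneGraph_of_pairwiseDisjoint {G : SimpleGraph {x // x ∈ S}} {F : Set (Sym2 Pt)}
    (hG : ∀ a b, G.Adj a b → s((a : Pt), b) ∈ F) (hF : F.PairwiseDisjoint segOpen) :
    IsPlaneGraph G := by
  intro a b c d hab hcd hne
  refine Set.disjoint_iff_inter_eq_empty.mp (hF (hG a b hab) (hG c d hcd) fun h => hne ?_)
  exact Sym2.map.injective Subtype.val_injective (by simpa using h)

lemma disjoint_edgeSet_of_disjoint {G H : SimpleGraph {x // x ∈ S}} {F F' : Set (Sym2 Pt)}
    (hG : ∀ a b, G.Adj a b → s((a : Pt), b) ∈ F) (hH : ∀ a b, H.Adj a b → s((a : Pt), b) ∈ F')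
    (hFF' : Disjoint F F') : Disjoint G.edgeSet H.edgeSet := by
  rw [Set.disjoint_left]
  rintro ⟨a, b⟩ haG haH
  exact Set.disjoint_left.mp hFF' (hG a b haG) (hH a b haH)

end GeometricGraph

section Wheel

variable {n : ℕ}

lemma wheel_eq (n : ℕ) :
    wheel n = insert 0 ((Finset.range (2 * n - 1)).image fun j : ℕ => polygonPt (2 * n - 1) j) := by
  simp [wheel, polygonPt, Prod.zero_eq_mk]

lemma zero_mem_wheel (n : ℕ) : (0 : Pt) ∈ wheel n := by
  rw [wheel_eq]; exact Finset.mem_insert_self _ _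

lemma polygonPt_mem_wheel (hn : 0 < n) (j : ℤ) : polygonPt (2 * n - 1) j ∈ wheel n := by
  have hm : 0 < 2 * n - 1 := by omega
  have h₀ : 0 ≤ j % (2 * n - 1 : ℕ) := Int.emod_nonneg j (by omega)
  have h₁ : j % (2 * n - 1 : ℕ) < (2 * n - 1 : ℕ) := Int.emod_lt_of_pos j (by omega)
  rw [← (polygonPt_eq_iff hm).mpr (Int.mod_modEq j _), ← Int.toNat_of_nonneg h₀, wheel_eq]
  exact Finset.mem_insert_of_mem (Finset.mem_image_of_mem _ (Finset.mem_range.mpr (by omega)))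

lemma card_wheel (hn : 0 < n) : (wheel n).card = 2 * n := by
  have hm : 0 < 2 * n - 1 := by omega
  rw [wheel_eq, Finset.card_insert_of_notMem, Finset.card_image_of_injOn, Finset.card_range]
  · omega
  · intro j hj k hk hjk
    simp only [Finset.coe_range, Set.mem_Iio] at hj hk
    have := ((polygonPt_eq_iff hm).mp hjk).eq_of_lt_add (by omega) (by omega)
    omega
  · simp only [Finset.mem_image, not_exists, not_and]
    exact fun j _ => polygonPt_ne_zero j

end Wheel

def zigzag (i : ℤ) (s : ℕ) : ℤ := if s % 2 = 0 then i - (s / 2 : ℕ) else i + ((s + 1) / 2 : ℕ)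

lemma zigzag_injective (i : ℤ) : Function.Injective (zigzag i) := by
  intro s t h
  unfold zigzag at h
  split_ifs at h <;> omega

lemma zigzag_chord (i : ℤ) (t : ℕ) : ∃ a b : ℤ, b - a = t + 1 ∧ (a + b = 2 * i ∨ a + b = 2 * i + 1) ∧
    s(zigzag i t, zigzag i (t + 1)) = s(a, b) := by
  by_cases ht : t % 2 = 0
  · refine ⟨zigzag i t, zigzag i (t + 1), ?_, ?_, rfl⟩ <;> simp only [zigzag] <;> split_ifs <;> omega
  · refine ⟨zigzag i (t + 1), zigzag i t, ?_, ?_, Sym2.eq_swap⟩ <;> simp only [zigzag] <;>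
      split_ifs <;> omega

-- `b - a ≠ 2K` excludes the chord `{i - K, i + K}`, which the two spokes replace.
noncomputable def zigzagEdges (n : ℕ) (i : ℤ) : Set (Sym2 Pt) :=
  {e | (∃ a b : ℤ, a < b ∧ b - a < (2 * n - 1 : ℕ) ∧ b - a ≠ 2 * (n / 2 : ℕ) ∧
      (a + b = 2 * i ∨ a + b = 2 * i + 1) ∧ e = s(polygonPt (2 * n - 1) a, polygonPt (2 * n - 1) b)) ∨
    e = s(0, polygonPt (2 * n - 1) (i + (n / 2 : ℕ))) ∨ e = s(0, polygonPt (2 * n - 1) (i - (n / 2 : ℕ)))}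

section Zigzag

variable {n : ℕ}

lemma disjoint_zigzagChord_spoke (hn : 2 ≤ n) {i a b x : ℤ} (hab : a < b)
    (hba : b - a < (2 * n - 1 : ℕ)) (hK : b - a ≠ 2 * (n / 2 : ℕ))
    (hsum : a + b = 2 * i ∨ a + b = 2 * i + 1) (hx : x = i + (n / 2 : ℕ) ∨ x = i - (n / 2 : ℕ)) :
    Disjoint (openSegment ℝ (polygonPt (2 * n - 1) a) (polygonPt (2 * n - 1) b))
      (openSegment ℝ 0 (polygonPt (2 * n - 1) x)) := by
  have hm : 0 < 2 * n - 1 := by omega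
  rcases lt_or_gt_of_ne hK with h | h
  · rcases hx with rfl | rfl
    · exact disjoint_chord_spoke hm hab (by omega) (by omega) (by omega)
    · rw [← polygonPt_add_self hm (i - (n / 2 : ℕ))]
      exact disjoint_chord_spoke hm hab (by omega) (by omega) (by omega)
  · exact disjoint_chord_spoke_of_long hm hba (by omega) (by omega) (by omega)

lemma pairwiseDisjoint_zigzagEdges (hn : 2 ≤ n) (i : ℤ) :
    (zigzagEdges n i).PairwiseDisjoint segOpen := by
  have hm : 0 < 2 * n - 1 := by omega
  rintro e (⟨a, b, hab, hba, hK, hs, rfl⟩ | rfl | rfl) f (⟨c, d, hcd, hdc, hK', hs', rfl⟩ | rfl | rfl)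
    hne <;> simp only [Function.onFun, segOpen_mk]
  · refine disjoint_chord_chord_of_sum hm hab hba hcd hdc (by omega) (by omega) ?_
    rintro ⟨rfl, rfl⟩
    exact hne rfl
  · exact disjoint_zigzagChord_spoke hn hab hba hK hs (Or.inl rfl)
  · exact disjoint_zigzagChord_spoke hn hab hba hK hs (Or.inr rfl)
  · exact (disjoint_zigzagChord_spoke hn hcd hdc hK' hs' (Or.inl rfl)).symm
  · exact absurd rfl hne
  · exact (disjoint_spoke_spoke hm (by omega) (by omega) (by omega)).symm
  · exact (disjoint_zigzagChord_spoke hn hcd hdc hK' hs' (Or.inr rfl)).symm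
  · exact disjoint_spoke_spoke hm (by omega) (by omega) (by omega)
  · exact absurd rfl hne

lemma add_modEq_of_polygonPt_pair_eq {m : ℕ} (hm : 0 < m) {a b c d : ℤ}
    (h : s(polygonPt m a, polygonPt m b) = s(polygonPt m c, polygonPt m d)) :
    a + b ≡ c + d [ZMOD m] := by
  rcases Sym2.eq_iff.mp h with ⟨h₁, h₂⟩ | ⟨h₁, h₂⟩
  · exact ((polygonPt_eq_iff hm).mp h₁).add ((polygonPt_eq_iff hm).mp h₂)
  · rw [add_comm c]
    exact ((polygonPt_eq_iff hm).mp h₁).add ((polygonPt_eq_iff hm).mp h₂)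

lemma disjoint_zigzagEdges {i j : ℕ} (hi : i + 1 < n) (hj : j + 1 < n) (hij : i ≠ j) :
    Disjoint (zigzagEdges n i) (zigzagEdges n j) := by
  have hm : 0 < 2 * n - 1 := by omega
  rw [Set.disjoint_left]
  have chord_ne_spoke (a b x : ℤ) : s(polygonPt (2 * n - 1) a, polygonPt (2 * n - 1) b) ≠
      s(0, polygonPt (2 * n - 1) x) := by
    simp [polygonPt_ne_zero]
  have spoke_eq {x y : ℤ} (h : s(0, polygonPt (2 * n - 1) x) = s(0, polygonPt (2 * n - 1) y))
      (h₁ : x < y + (2 * n - 1 : ℕ)) (h₂ : y < x + (2 * n - 1 : ℕ)) : x = y :=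
    ((polygonPt_eq_iff hm).mp (Sym2.congr_right.mp h)).eq_of_lt_add h₁ h₂
  rintro e (⟨a, b, hab, hba, -, hs, rfl⟩ | rfl | rfl) (⟨c, d, hcd, hdc, -, hs', he⟩ | he | he)
  · have := (add_modEq_of_polygonPt_pair_eq hm he).eq_of_lt_add (by omega) (by omega)
    omega
  any_goals exact chord_ne_spoke _ _ _ he
  any_goals exact chord_ne_spoke _ _ _ he.symm
  all_goals
    have := spoke_eq he (by omega) (by omega)
    omega

end Zigzag

noncomputable def wheelPathPt (n : ℕ) (i : ℤ) (s : ℕ) : Pt :=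
  if s = 2 * (n / 2) then 0
  else polygonPt (2 * n - 1) (zigzag i (if s < 2 * (n / 2) then s else s - 1))

section WheelPath

variable {n : ℕ}

lemma wheelPathPt_mem (hn : 0 < n) (i : ℤ) (s : ℕ) : wheelPathPt n i s ∈ wheel n := by
  unfold wheelPathPt
  split_ifs
  · exact zero_mem_wheel n
  all_goals exact polygonPt_mem_wheel hn _

lemma wheelPathPt_center (n : ℕ) (i : ℤ) : wheelPathPt n i (2 * (n / 2)) = 0 := if_pos rfl

lemma wheelPathPt_of_ne {i : ℤ} {s : ℕ} (hs : s ≠ 2 * (n / 2)) :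
    wheelPathPt n i s = polygonPt (2 * n - 1) (zigzag i (if s < 2 * (n / 2) then s else s - 1)) :=
  if_neg hs

lemma wheelPathPt_injOn (hn : 0 < n) (i : ℤ) {s t : ℕ} (hs : s < 2 * n) (ht : t < 2 * n)
    (h : wheelPathPt n i s = wheelPathPt n i t) : s = t := by
  have hm : 0 < 2 * n - 1 := by omega
  rcases eq_or_ne s (2 * (n / 2)) with rfl | hs' <;> rcases eq_or_ne t (2 * (n / 2)) with rfl | ht'
  · rfl
  · rw [wheelPathPt_center, wheelPathPt_of_ne ht'] at h
    exact absurd h.symm (polygonPt_ne_zero _)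
  · rw [wheelPathPt_center, wheelPathPt_of_ne hs'] at h
    exact absurd h (polygonPt_ne_zero _)
  · rw [wheelPathPt_of_ne hs', wheelPathPt_of_ne ht'] at h
    have := zigzag_injective i (((polygonPt_eq_iff hm).mp h).eq_of_lt_add
      (by simp only [zigzag]; split_ifs <;> omega) (by simp only [zigzag]; split_ifs <;> omega))
    split_ifs at this <;> omega

noncomputable def wheelPathEquiv (hn : 0 < n) (i : ℤ) : Fin (2 * n) ≃ {x // x ∈ wheel n} :=
  Equiv.ofBijective (fun s => ⟨wheelPathPt n i s, wheelPathPt_mem hn i s⟩) <| by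
    rw [Fintype.bijective_iff_injective_and_card, Fintype.card_coe, card_wheel hn, Fintype.card_fin]
    exact ⟨fun s t h => Fin.ext (wheelPathPt_injOn hn i s.2 t.2 (congrArg Subtype.val h)), rfl⟩

lemma wheelPathPt_step_mem (hn : 2 ≤ n) (i : ℤ) {s : ℕ} (hs : s + 1 < 2 * n) :
    s(wheelPathPt n i s, wheelPathPt n i (s + 1)) ∈ zigzagEdges n i := by
  have chord_mem {t : ℕ} (ht : t + 1 < 2 * n - 1) (hK : t + 1 ≠ 2 * (n / 2)) :
      s(polygonPt (2 * n - 1) (zigzag i t), polygonPt (2 * n - 1) (zigzag i (t + 1))) ∈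
        zigzagEdges n i := by
    obtain ⟨a, b, hba, hsum, hab⟩ := zigzag_chord i t
    refine Or.inl ⟨a, b, by omega, by omega, by omega, hsum, ?_⟩
    simpa using congrArg (Sym2.map (polygonPt (2 * n - 1))) hab
  set c := 2 * (n / 2)
  rcases lt_trichotomy (s + 1) c with h | h | h
  · rw [wheelPathPt_of_ne (by omega : s ≠ c), wheelPathPt_of_ne h.ne, if_pos (by omega : s < c),
      if_pos h]
    exact chord_mem (by omega) h.ne
  · rw [h, wheelPathPt_center, wheelPathPt_of_ne (by omega : s ≠ c), if_pos (by omega : s < c),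
      Sym2.eq_swap]
    refine Or.inr (Or.inl (congrArg _ (congrArg _ ?_)))
    simp only [zigzag]; split_ifs <;> omega
  · obtain ⟨t, rfl⟩ : ∃ t, s = t + 1 := ⟨s - 1, by omega⟩
    rcases (Nat.lt_succ_iff.mp h).eq_or_lt with h' | h'
    · rw [← h', wheelPathPt_center, wheelPathPt_of_ne (by omega : c + 1 ≠ c),
        if_neg (by omega : ¬ c + 1 < c), Nat.add_sub_cancel]
      refine Or.inr (Or.inr (congrArg _ (congrArg _ ?_)))
      simp only [zigzag]; split_ifs <;> omega
    · rw [wheelPathPt_of_ne h'.ne', wheelPathPt_of_ne (by omega : t + 1 + 1 ≠ c),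
        if_neg (by omega : ¬ t + 1 < c), if_neg (by omega : ¬ t + 1 + 1 < c), Nat.add_sub_cancel,
        Nat.add_sub_cancel]
      exact chord_mem (by omega) (by omega)

lemma wheelPath_adj_mem (hn : 2 ≤ n) (i : ℤ) {u v : {x // x ∈ wheel n}}
    (h : (SimpleGraph.pathGraphOf (wheelPathEquiv (by omega) i)).Adj u v) :
    s((u : Pt), v) ∈ zigzagEdges n i := by
  obtain ⟨k, k', hk, huv⟩ := SimpleGraph.pathGraphOf_adj _ h
  have : s((u : Pt), v) = s(wheelPathPt n i k, wheelPathPt n i (k + 1)) := by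
    simpa [wheelPathEquiv, hk] using congrArg (Sym2.map Subtype.val) huv
  rw [this]
  exact wheelPathPt_step_mem hn i (by omega)

end WheelPath

/-- For every `n ≥ 2`, the complete geometric graph on the wheel
`W_{2n}` contains `n − 1` pairwise edge-disjoint plane spanning paths. -/
theorem wheel_spanning_paths (n : ℕ) (hn : 2 ≤ n) :
    ∃ P : Fin (n - 1) → SimpleGraph {x // x ∈ wheel n},
      (∀ i, IsPlaneSpanningPath (P i)) ∧
      (∀ i j, i ≠ j → Disjoint (P i).edgeSet (P j).edgeSet) := by
  refine ⟨fun i => SimpleGraph.pathGraphOf (wheelPathEquiv (by omega) i), fun i => ?_,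
    fun i j hij => ?_⟩
  · refine ⟨⟨SimpleGraph.pathGraphOf_isTree (by omega) _, ?_⟩,
      fun _ _ _ _ => SimpleGraph.pathGraphOf_adj_pigeonhole _⟩
    exact isPlaneGraph_of_pairwiseDisjoint (fun _ _ => wheelPath_adj_mem hn i)
      (pairwiseDisjoint_zigzagEdges hn i)
  · exact disjoint_edgeSet_of_disjoint (fun _ _ => wheelPath_adj_mem hn i)
      (fun _ _ => wheelPath_adj_mem hn j) (disjoint_zigzagEdges (by omega) (by omega) (by omega))
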